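/- Let s ∈ (0,1), β ∈ (0,1) with β + 2s not an integer, and let a be a finite nonnegative measure on S^{n−1} with total mass at most Λ. Define Lv(x) = ∫_0^∞ dρ ∫_{S^{n−1}} da(ω) (2v(x) − v(x+ρω) − v(x−ρω)) / ρ^{1+2s}. If v ∈ C^{β+2s}(ℝⁿ), then Lv ∈ C^β(B₁) with [Lv]_{C^β(B₁)} ≤ C [v]_{C^{β+2s}(ℝⁿ)}, where C depends on n, s, β, Λ. -/

import Mathlib

/-!
Write `δ_h v(x) = 2 v(x) - v(x + h) - v(x - h)`, so that `Lv(x) - Lv(y)` is the radial integral of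
`∫ (δ_{ρω} v(x) - δ_{ρω} v(y)) da(ω) / ρ^{1+2s}`. Split it at `r = |x - y|`. For `|h| ≤ r` the
difference is bounded by `M r^{β+2s-p} |h|^p` with `p > 2s`, using the regularity of `v` in the
direction `h`; for `|h| > r` it is bounded by `M r^{β+2s-q} |h|^q` with `q < 2s`, using the
regularity in the direction `x - y`. Both pieces of the radial integral are then `O(M r^β)`.
The pairs are `(p, q) = (β+2s, 0)`, `(β+2s, β+2s-1)`, `(2, β+2s-1)` according as
`⌊β + 2s⌋ = 0, 1, 2`, and each bound is a mean value inequality for `v` or one of its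
derivatives.
-/

open Metric MeasureTheory Set

noncomputable section

/-- The anisotropic operator
`Lv(x) = ∫_0^∞ dρ ∫_{S^{n-1}} da(ω) (2v(x) - v(x+ρω) - v(x-ρω)) / ρ^{1+2s}`. -/
def anisoOp (n : ℕ) (s : ℝ)
    (a : Measure (Metric.sphere (0 : EuclideanSpace ℝ (Fin n)) 1))
    (v : EuclideanSpace ℝ (Fin n) → ℝ) (x : EuclideanSpace ℝ (Fin n)) : ℝ :=
  ∫ ρ in Set.Ioi (0 : ℝ),
    (∫ ω : Metric.sphere (0 : EuclideanSpace ℝ (Fin n)) 1,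
      (2 * v x - v (x + ρ • (ω : EuclideanSpace ℝ (Fin n)))
        - v (x - ρ • (ω : EuclideanSpace ℝ (Fin n)))) ∂a) / ρ ^ (1 + 2 * s)

section SecondDifference

variable {E F : Type*} [NormedAddCommGroup E] [NormedAddCommGroup F] [NormedSpace ℝ F]

def secondDiff (f : E → F) (z h : E) : F := (2 : ℝ) • f z - f (z + h) - f (z - h)

lemma secondDiff_eq_add (f : E → F) (z h : E) :
    secondDiff f z h = (f z - f (z + h)) + (f z - f (z - h)) := by
  rw [secondDiff, two_smul]; abel

lemma norm_secondDiff_le_of_holder {f : E → F} {M α : ℝ}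
    (hf : ∀ a b, ‖f a - f b‖ ≤ M * ‖a - b‖ ^ α) (z h : E) :
    ‖secondDiff f z h‖ ≤ 2 * M * ‖h‖ ^ α := by
  have h₁ := hf z (z + h)
  have h₂ := hf z (z - h)
  rw [sub_add_cancel_left, norm_neg] at h₁
  rw [sub_sub_cancel] at h₂
  rw [secondDiff_eq_add]
  linarith [norm_add_le (f z - f (z + h)) (f z - f (z - h))]

lemma norm_secondDiff_sub_secondDiff_le_of_holder {f : E → F} {M α : ℝ}
    (hf : ∀ a b, ‖f a - f b‖ ≤ M * ‖a - b‖ ^ α) (x y h : E) :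
    ‖secondDiff f x h - secondDiff f y h‖ ≤ 4 * M * ‖x - y‖ ^ α := by
  have h₀ := hf x y
  have h₁ := hf (x + h) (y + h)
  have h₂ := hf (x - h) (y - h)
  rw [add_sub_add_right_eq_sub] at h₁
  rw [sub_sub_sub_cancel_right] at h₂
  have key : secondDiff f x h - secondDiff f y h
      = (2 : ℝ) • (f x - f y) - (f (x + h) - f (y + h)) - (f (x - h) - f (y - h)) := by
    rw [secondDiff, secondDiff, smul_sub]; abel
  have h₃ := norm_sub_le ((2 : ℝ) • (f x - f y) - (f (x + h) - f (y + h)))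
    (f (x - h) - f (y - h))
  have h₄ := norm_sub_le ((2 : ℝ) • (f x - f y)) (f (x + h) - f (y + h))
  rw [norm_smul, Real.norm_two] at h₄
  rw [key]
  linarith

variable [NormedSpace ℝ E] {f : E → F} {f' : E → E →L[ℝ] F}

lemma hasFDerivAt_secondDiff (hf : ∀ z, HasFDerivAt f (f' z) z) (h z : E) :
    HasFDerivAt (fun w => secondDiff f w h) (secondDiff f' z h) z :=
  (((hf z).const_smul (2 : ℝ)).sub ((hasFDerivAt_comp_add_right h).mpr (hf (z + h)))).sub
    ((hasFDerivAt_comp_sub h).mpr (hf (z - h)))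

/-- First-order Taylor expansion at `z` in the directions `h` and `-h`; the linear terms cancel. -/
lemma norm_secondDiff_le_of_fderiv (hf : ∀ z, HasFDerivAt f (f' z) z) {z h : E} {C : ℝ}
    (hC : ∀ ζ, ‖ζ - z‖ ≤ ‖h‖ → ‖f' ζ - f' z‖ ≤ C) :
    ‖secondDiff f z h‖ ≤ 2 * C * ‖h‖ := by
  have taylor : ∀ k : E, ‖k‖ = ‖h‖ → ‖f (z + k) - f z - f' z k‖ ≤ C * ‖h‖ := by
    intro k hk
    have hseg : segment ℝ z (z + k) ⊆ closedBall z ‖h‖ :=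
      (convex_closedBall z ‖h‖).segment_subset (mem_closedBall_self (norm_nonneg h))
        (by simp [hk])
    simpa [hk] using (convex_segment z (z + k)).norm_image_sub_le_of_norm_hasFDerivWithin_le'
      (fun ζ _ => (hf ζ).hasFDerivWithinAt)
      (fun ζ hζ => hC ζ (mem_closedBall_iff_norm.mp (hseg hζ)))
      (left_mem_segment ℝ z (z + k)) (right_mem_segment ℝ z (z + k))
  have h_pos := taylor h rfl
  have h_neg := taylor (-h) (norm_neg h)
  rw [← sub_eq_add_neg, map_neg] at h_neg
  have key : secondDiff f z h
      = -((f (z + h) - f z - f' z h) + (f (z - h) - f z - -f' z h)) := by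
    rw [secondDiff, two_smul]; abel
  rw [key, norm_neg]
  linarith [norm_add_le (f (z + h) - f z - f' z h) (f (z - h) - f z - -f' z h)]

lemma norm_secondDiff_sub_secondDiff_le_of_fderiv (hf : ∀ z, HasFDerivAt f (f' z) z)
    {x y h : E} {C : ℝ} (hC : ∀ ζ ∈ segment ℝ y x, ‖secondDiff f' ζ h‖ ≤ C) :
    ‖secondDiff f x h - secondDiff f y h‖ ≤ C * ‖x - y‖ :=
  (convex_segment y x).norm_image_sub_le_of_norm_hasFDerivWithin_le
    (fun ζ _ => (hasFDerivAt_secondDiff hf h ζ).hasFDerivWithinAt) hC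
    (left_mem_segment ℝ y x) (right_mem_segment ℝ y x)

lemma norm_secondDiff_le_of_fderiv_holder (hf : ∀ z, HasFDerivAt f (f' z) z) {M α : ℝ}
    (hf' : ∀ a b, ‖f' a - f' b‖ ≤ M * ‖a - b‖ ^ α) (hM : 0 ≤ M) (hα : 0 ≤ α) (z h : E) :
    ‖secondDiff f z h‖ ≤ 2 * M * ‖h‖ ^ α * ‖h‖ := by
  have := norm_secondDiff_le_of_fderiv hf (z := z) (h := h) (C := M * ‖h‖ ^ α) fun ζ hζ =>
    (hf' ζ z).trans (by gcongr)
  linarith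

lemma norm_secondDiff_sub_secondDiff_le_of_fderiv_holder (hf : ∀ z, HasFDerivAt f (f' z) z)
    {M α : ℝ} (hf' : ∀ a b, ‖f' a - f' b‖ ≤ M * ‖a - b‖ ^ α) (x y h : E) :
    ‖secondDiff f x h - secondDiff f y h‖ ≤ 2 * M * ‖h‖ ^ α * ‖x - y‖ :=
  norm_secondDiff_sub_secondDiff_le_of_fderiv hf fun ζ _ => norm_secondDiff_le_of_holder hf' ζ h

/-- The difference of the second differences at `x` and `y` is the second difference at `x` of
`w ↦ f w - f (w + (y - x))`, whose second derivative is at most `M ‖x - y‖ ^ α`. -/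
lemma norm_secondDiff_sub_secondDiff_le_of_fderiv_fderiv_holder
    (hf : ∀ z, HasFDerivAt f (f' z) z) {f'' : E → E →L[ℝ] E →L[ℝ] F}
    (hf' : ∀ z, HasFDerivAt f' (f'' z) z) {M α : ℝ}
    (hf'' : ∀ a b, ‖f'' a - f'' b‖ ≤ M * ‖a - b‖ ^ α) (x y h : E) :
    ‖secondDiff f x h - secondDiff f y h‖ ≤ 2 * M * ‖x - y‖ ^ α * ‖h‖ * ‖h‖ := by
  obtain ⟨e, rfl⟩ : ∃ e, y = x + e := ⟨y - x, by abel⟩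
  have hψ : ∀ z, HasFDerivAt (fun w => f w - f (w + e)) (f' z - f' (z + e)) z := fun z =>
    (hf z).sub ((hasFDerivAt_comp_add_right e).mpr (hf (z + e)))
  have hψ' : ∀ z, HasFDerivAt (fun w => f' w - f' (w + e)) (f'' z - f'' (z + e)) z := fun z =>
    (hf' z).sub ((hasFDerivAt_comp_add_right e).mpr (hf' (z + e)))
  have hψ'' : ∀ z, ‖f'' z - f'' (z + e)‖ ≤ M * ‖x - (x + e)‖ ^ α := fun z => by
    simpa using hf'' z (z + e)
  have lipschitz : ∀ ζ, ‖(f' ζ - f' (ζ + e)) - (f' x - f' (x + e))‖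
      ≤ M * ‖x - (x + e)‖ ^ α * ‖ζ - x‖ := fun ζ =>
    convex_univ.norm_image_sub_le_of_norm_hasFDerivWithin_le
      (fun z _ => (hψ' z).hasFDerivWithinAt) (fun z _ => hψ'' z) (mem_univ x) (mem_univ ζ)
  have hK : 0 ≤ M * ‖x - (x + e)‖ ^ α :=
    (norm_nonneg (f'' x - f'' (x + e))).trans (hψ'' x)
  have key : secondDiff f x h - secondDiff f (x + e) h
      = secondDiff (fun w => f w - f (w + e)) x h := by
    simp only [secondDiff, add_right_comm x h e, sub_add_eq_add_sub, smul_sub]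
    abel
  rw [key]
  have := norm_secondDiff_le_of_fderiv hψ (z := x) (h := h)
    (C := M * ‖x - (x + e)‖ ^ α * ‖h‖) fun ζ hζ => (lipschitz ζ).trans (by gcongr)
  linarith

end SecondDifference

section IteratedFDeriv

variable {𝕜 E F : Type*} [NontriviallyNormedField 𝕜] [NormedAddCommGroup E] [NormedSpace 𝕜 E]
  [NormedAddCommGroup F] [NormedSpace 𝕜 F]

lemma norm_iteratedFDeriv_zero_sub (f : E → F) (a b : E) :
    ‖iteratedFDeriv 𝕜 0 f a - iteratedFDeriv 𝕜 0 f b‖ = ‖f a - f b‖ := by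
  rw [iteratedFDeriv_zero_eq_comp, Function.comp_apply, Function.comp_apply, ← map_sub,
    LinearIsometryEquiv.norm_map]

lemma norm_iteratedFDeriv_succ_sub (f : E → F) (n : ℕ) (a b : E) :
    ‖iteratedFDeriv 𝕜 (n + 1) f a - iteratedFDeriv 𝕜 (n + 1) f b‖
      = ‖iteratedFDeriv 𝕜 n (fderiv 𝕜 f) a - iteratedFDeriv 𝕜 n (fderiv 𝕜 f) b‖ := by
  rw [iteratedFDeriv_succ_eq_comp_right, iteratedFDeriv_succ_eq_comp_right, Function.comp_apply,
    Function.comp_apply, ← LinearIsometryEquiv.map_sub, LinearIsometryEquiv.norm_map]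

end IteratedFDeriv

/-- Also valid when `f` and `g` are not integrable: then both integrals are the junk value `0`. -/
lemma abs_integral_sub_integral_le {α : Type*} [MeasurableSpace α] {μ : Measure α}
    {f g K : α → ℝ} (hf : AEStronglyMeasurable f μ) (hg : AEStronglyMeasurable g μ)
    (hK : Integrable K μ) (hfg : ∀ᵐ x ∂μ, |f x - g x| ≤ K x) :
    |∫ x, f x ∂μ - ∫ x, g x ∂μ| ≤ ∫ x, K x ∂μ := by
  have hsub : Integrable (f - g) μ := hK.mono' (hf.sub hg) hfg
  by_cases hfi : Integrable f μ
  · have hgi : Integrable g μ := by simpa using hfi.sub hsub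
    rw [← integral_sub hfi hgi]
    exact (abs_integral_le_integral_abs).trans (integral_mono_ae hsub.abs hK hfg)
  · have hgi : ¬ Integrable g μ := fun hgi => hfi (by simpa using hgi.add hsub)
    rw [integral_undef hfi, integral_undef hgi, sub_zero, abs_zero]
    exact integral_nonneg_of_ae (hfg.mono fun x hx => (abs_nonneg _).trans hx)

lemma abs_integral_sub_integral_le_of_forall {α : Type*} [MeasurableSpace α] {μ : Measure α}
    [IsFiniteMeasure μ] {f g : α → ℝ} {K : ℝ} (hf : AEStronglyMeasurable f μ)
    (hg : AEStronglyMeasurable g μ) (hfg : ∀ x, |f x - g x| ≤ K) :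
    |∫ x, f x ∂μ - ∫ x, g x ∂μ| ≤ μ.real univ * K := by
  simpa using abs_integral_sub_integral_le hf hg (integrable_const K) (ae_of_all μ hfg)

section PiecewisePower

variable {r p q : ℝ} (hr : 0 < r) (hp : -1 < p) (hq : q < -1) (A B : ℝ)
include hr hp hq

lemma integrableOn_Ioc_Ioi_ite_rpow :
    IntegrableOn (fun ρ => if ρ ≤ r then A * ρ ^ p else B * ρ ^ q) (Ioc 0 r) ∧
      IntegrableOn (fun ρ => if ρ ≤ r then A * ρ ^ p else B * ρ ^ q) (Ioi r) :=
  ⟨IntegrableOn.congr_fun (((intervalIntegrable_iff_integrableOn_Ioc_of_le hr.le).mp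
      (intervalIntegral.intervalIntegrable_rpow' hp)).const_mul A)
      (fun _ hρ => (if_pos hρ.2).symm) measurableSet_Ioc,
    IntegrableOn.congr_fun ((integrableOn_Ioi_rpow_of_lt hq hr).const_mul B)
      (fun _ hρ => (if_neg (not_le.mpr hρ)).symm) measurableSet_Ioi⟩

lemma integrableOn_Ioi_ite_rpow :
    IntegrableOn (fun ρ => if ρ ≤ r then A * ρ ^ p else B * ρ ^ q) (Ioi 0) := by
  obtain ⟨h₁, h₂⟩ := integrableOn_Ioc_Ioi_ite_rpow hr hp hq A B
  rw [← Ioc_union_Ioi_eq_Ioi hr.le]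
  exact h₁.union h₂

lemma integral_Ioi_ite_rpow :
    ∫ ρ in Ioi 0, (if ρ ≤ r then A * ρ ^ p else B * ρ ^ q)
      = A * r ^ (p + 1) / (p + 1) - B * r ^ (q + 1) / (q + 1) := by
  obtain ⟨h₁, h₂⟩ := integrableOn_Ioc_Ioi_ite_rpow hr hp hq A B
  rw [← Ioc_union_Ioi_eq_Ioi hr.le,
    setIntegral_union (Ioc_disjoint_Ioi le_rfl) measurableSet_Ioi h₁ h₂,
    setIntegral_congr_fun measurableSet_Ioc (fun ρ hρ => if_pos hρ.2),
    setIntegral_congr_fun measurableSet_Ioi (fun ρ hρ => if_neg (not_le.mpr hρ)),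
    integral_const_mul, integral_const_mul, ← intervalIntegral.integral_of_le hr.le,
    integral_rpow (Or.inl hp), integral_Ioi_rpow_of_lt hq hr, Real.zero_rpow (by linarith)]
  ring

end PiecewisePower

section Operator

variable {n : ℕ} {a : Measure (sphere (0 : EuclideanSpace ℝ (Fin n)) 1)}
  {v : EuclideanSpace ℝ (Fin n) → ℝ}

lemma anisoOp_eq_integral_secondDiff (s : ℝ) (x : EuclideanSpace ℝ (Fin n)) :
    anisoOp n s a v x = ∫ ρ in Ioi 0,
      (∫ ω, secondDiff v x (ρ • (ω : EuclideanSpace ℝ (Fin n))) ∂a) / ρ ^ (1 + 2 * s) := rfl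

variable [IsFiniteMeasure a]

lemma continuous_integral_secondDiff_sphere (hv : Continuous v)
    (x : EuclideanSpace ℝ (Fin n)) :
    Continuous fun ρ : ℝ => ∫ ω, secondDiff v x (ρ • (ω : EuclideanSpace ℝ (Fin n))) ∂a := by
  have hδ : Continuous fun q : ℝ × sphere (0 : EuclideanSpace ℝ (Fin n)) 1 =>
      secondDiff v x (q.1 • (q.2 : EuclideanSpace ℝ (Fin n))) := by
    unfold secondDiff; fun_prop
  simpa using continuous_parametric_integral_of_continuous (μ := a) hδ isCompact_univ

lemma abs_integral_secondDiff_sphere_sub_le (hv : Continuous v)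
    {x y : EuclideanSpace ℝ (Fin n)} {ρ K : ℝ} (hρ : 0 < ρ)
    (hK : ∀ h : EuclideanSpace ℝ (Fin n), ‖h‖ = ρ →
      ‖secondDiff v x h - secondDiff v y h‖ ≤ K) :
    |∫ ω, secondDiff v x (ρ • (ω : EuclideanSpace ℝ (Fin n))) ∂a
      - ∫ ω, secondDiff v y (ρ • (ω : EuclideanSpace ℝ (Fin n))) ∂a| ≤ a.real univ * K := by
  have hδ : ∀ z, Continuous fun ω : sphere (0 : EuclideanSpace ℝ (Fin n)) 1 =>
      secondDiff v z (ρ • (ω : EuclideanSpace ℝ (Fin n))) := fun z => by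
    unfold secondDiff; fun_prop
  refine abs_integral_sub_integral_le_of_forall (hδ x).aestronglyMeasurable
    (hδ y).aestronglyMeasurable fun ω => (Real.norm_eq_abs _).symm.trans_le (hK _ ?_)
  rw [norm_smul, Real.norm_of_nonneg hρ.le, norm_eq_of_mem_sphere, mul_one]

/-- The factors `r ^ (β + 2s - p)` and `r ^ (β + 2s - q)` are what make both parts of the radial
integral, over `(0, r]` and over `(r, ∞)`, of size `r ^ β`. -/
lemma abs_anisoOp_sub_le (hv : Continuous v) {x y : EuclideanSpace ℝ (Fin n)}
    {s β r p q A B : ℝ} (hr : 0 < r) (hp : 2 * s < p) (hq : q < 2 * s)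
    (hsmall : ∀ h, ‖h‖ ≤ r →
      ‖secondDiff v x h - secondDiff v y h‖ ≤ A * r ^ (β + 2 * s - p) * ‖h‖ ^ p)
    (hlarge : ∀ h, r < ‖h‖ →
      ‖secondDiff v x h - secondDiff v y h‖ ≤ B * r ^ (β + 2 * s - q) * ‖h‖ ^ q) :
    |anisoOp n s a v x - anisoOp n s a v y|
      ≤ a.real univ * (A / (p - 2 * s) + B / (2 * s - q)) * r ^ β := by
  set A' := A * r ^ (β + 2 * s - p)
  set B' := B * r ^ (β + 2 * s - q)
  have hp' : -1 < p - (1 + 2 * s) := by linarith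
  have hq' : q - (1 + 2 * s) < -1 := by linarith
  have hmeas : ∀ z, AEStronglyMeasurable (fun ρ : ℝ =>
      (∫ ω, secondDiff v z (ρ • (ω : EuclideanSpace ℝ (Fin n))) ∂a) / ρ ^ (1 + 2 * s))
      (volume.restrict (Ioi 0)) := fun z =>
    ((continuous_integral_secondDiff_sphere hv z).measurable.div
      (measurable_id.pow_const _)).aestronglyMeasurable
  rw [anisoOp_eq_integral_secondDiff, anisoOp_eq_integral_secondDiff]
  refine (abs_integral_sub_integral_le (hmeas x) (hmeas y)
    ((integrableOn_Ioi_ite_rpow hr hp' hq' A' B').const_mul (a.real univ)) ?_).trans_eq ?_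
  · refine (ae_restrict_iff' measurableSet_Ioi).mpr (ae_of_all _ fun ρ (hρ : 0 < ρ) => ?_)
    have hρc : 0 < ρ ^ (1 + 2 * s) := Real.rpow_pos_of_pos hρ _
    rw [← sub_div, abs_div, abs_of_pos hρc, div_le_iff₀ hρc]
    split_ifs with hρr
    · calc _ ≤ a.real univ * (A' * ρ ^ p) :=
            abs_integral_secondDiff_sphere_sub_le hv hρ fun h hh =>
              (hsmall h (hh.le.trans hρr)).trans_eq (by rw [hh])
        _ = _ := by rw [Real.rpow_sub hρ]; field_simp
    · calc _ ≤ a.real univ * (B' * ρ ^ q) :=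
            abs_integral_secondDiff_sphere_sub_le hv hρ fun h hh =>
              (hlarge h (hh ▸ not_le.mp hρr)).trans_eq (by rw [hh])
        _ = _ := by rw [Real.rpow_sub hρ]; field_simp
  · have hA : r ^ (β + 2 * s - p) * r ^ (p - (1 + 2 * s) + 1) = r ^ β := by
      rw [← Real.rpow_add hr]; ring_nf
    have hB : r ^ (β + 2 * s - q) * r ^ (q - (1 + 2 * s) + 1) = r ^ β := by
      rw [← Real.rpow_add hr]; ring_nf
    rw [integral_const_mul, integral_Ioi_ite_rpow hr hp' hq', mul_assoc A, hA, mul_assoc B, hB,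
      show q - (1 + 2 * s) + 1 = -(2 * s - q) by ring,
      show p - (1 + 2 * s) + 1 = p - 2 * s by ring, div_neg]
    ring

section HolderCases

variable {x y : EuclideanSpace ℝ (Fin n)} {s β M : ℝ}

lemma abs_anisoOp_sub_le_of_holder_zero (hv : Continuous v)
    (hH : ∀ a b, ‖v a - v b‖ ≤ M * ‖a - b‖ ^ (β + 2 * s)) (hs : 0 < s) (hβ : 0 < β)
    (hxy : x ≠ y) :
    |anisoOp n s a v x - anisoOp n s a v y|
      ≤ a.real univ * ((4 / β + 2 / s) * M) * ‖x - y‖ ^ β := by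
  refine (abs_anisoOp_sub_le (β := β) (p := β + 2 * s) (q := 0) (A := 4 * M) (B := 4 * M) hv
    (norm_pos_iff.mpr (sub_ne_zero.mpr hxy)) (by linarith) (by linarith) (fun h _ => ?_)
    (fun h _ => ?_)).trans_eq ?_
  · rw [sub_self, Real.rpow_zero, mul_one]
    linarith [norm_sub_le (secondDiff v x h) (secondDiff v y h),
      norm_secondDiff_le_of_holder hH x h, norm_secondDiff_le_of_holder hH y h]
  · rw [sub_zero, Real.rpow_zero, mul_one]
    exact norm_secondDiff_sub_secondDiff_le_of_holder hH x y h
  · rw [add_sub_cancel_right, sub_zero]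
    field_simp
    ring

lemma abs_anisoOp_sub_le_of_holder_one
    {v' : EuclideanSpace ℝ (Fin n) → EuclideanSpace ℝ (Fin n) →L[ℝ] ℝ}
    (hv : ∀ z, HasFDerivAt v (v' z) z)
    (hH : ∀ a b, ‖v' a - v' b‖ ≤ M * ‖a - b‖ ^ (β + 2 * s - 1)) (hM : 0 ≤ M)
    (ht : 1 ≤ β + 2 * s) (hβ : β ∈ Ioo 0 1) (hxy : x ≠ y) :
    |anisoOp n s a v x - anisoOp n s a v y|
      ≤ a.real univ * ((4 / β + 2 / (1 - β)) * M) * ‖x - y‖ ^ β := by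
  obtain ⟨hβ0, hβ1⟩ := hβ
  have hpow : ∀ h : EuclideanSpace ℝ (Fin n),
      ‖h‖ ^ (β + 2 * s - 1) * ‖h‖ = ‖h‖ ^ (β + 2 * s) := fun h => by
    rw [← Real.rpow_add_one' (norm_nonneg h) (by linarith)]
    ring_nf
  refine (abs_anisoOp_sub_le (β := β) (p := β + 2 * s) (q := β + 2 * s - 1) (A := 4 * M)
    (B := 2 * M) (continuous_iff_continuousAt.2 fun z => (hv z).continuousAt)
    (norm_pos_iff.mpr (sub_ne_zero.mpr hxy)) (by linarith) (by linarith) (fun h _ => ?_)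
    (fun h _ => ?_)).trans_eq ?_
  · rw [sub_self, Real.rpow_zero, mul_one, ← hpow]
    linarith [norm_sub_le (secondDiff v x h) (secondDiff v y h),
      norm_secondDiff_le_of_fderiv_holder hv hH hM (by linarith) x h,
      norm_secondDiff_le_of_fderiv_holder hv hH hM (by linarith) y h]
  · rw [show β + 2 * s - (β + 2 * s - 1) = 1 by ring, Real.rpow_one]
    linarith [norm_secondDiff_sub_secondDiff_le_of_fderiv_holder hv hH x y h]
  · rw [add_sub_cancel_right, show 2 * s - (β + 2 * s - 1) = 1 - β by ring]
    ring

lemma abs_anisoOp_sub_le_of_holder_two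
    {v' : EuclideanSpace ℝ (Fin n) → EuclideanSpace ℝ (Fin n) →L[ℝ] ℝ}
    {v'' : EuclideanSpace ℝ (Fin n) →
      EuclideanSpace ℝ (Fin n) →L[ℝ] EuclideanSpace ℝ (Fin n) →L[ℝ] ℝ}
    (hv : ∀ z, HasFDerivAt v (v' z) z) (hv' : ∀ z, HasFDerivAt v' (v'' z) z)
    (hH : ∀ a b, ‖v'' a - v'' b‖ ≤ M * ‖a - b‖ ^ (β + 2 * s - 2)) (hM : 0 ≤ M)
    (ht : 2 ≤ β + 2 * s) (hs : s < 1) (hβ : β < 1) (hxy : x ≠ y) :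
    |anisoOp n s a v x - anisoOp n s a v y|
      ≤ a.real univ * ((2 / (2 - 2 * s) + 2 / (1 - β)) * M) * ‖x - y‖ ^ β := by
  refine (abs_anisoOp_sub_le (β := β) (p := 2) (q := β + 2 * s - 1) (A := 2 * M) (B := 2 * M)
    (continuous_iff_continuousAt.2 fun z => (hv z).continuousAt)
    (norm_pos_iff.mpr (sub_ne_zero.mpr hxy)) (by linarith) (by linarith) (fun h _ => ?_)
    (fun h _ => ?_)).trans_eq ?_
  · rw [Real.rpow_two]
    linarith [norm_secondDiff_sub_secondDiff_le_of_fderiv_fderiv_holder hv hv' hH x y h]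
  · rw [show β + 2 * s - (β + 2 * s - 1) = 1 by ring, Real.rpow_one,
      show β + 2 * s - 1 = β + 2 * s - 2 + 1 by ring,
      Real.rpow_add_one' (norm_nonneg h) (by linarith)]
    linarith [norm_secondDiff_sub_secondDiff_le_of_fderiv hv (x := x) (y := y) fun ζ _ =>
      norm_secondDiff_le_of_fderiv_holder hv' hH hM (by linarith) ζ h]
  · rw [show 2 * s - (β + 2 * s - 1) = 1 - β by ring]
    ring

end HolderCases
lemma abs_anisoOp_sub_le_of_contDiff_holder {x y : EuclideanSpace ℝ (Fin n)} {s β Λ M : ℝ}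
    (hs : s ∈ Ioo 0 1) (hβ : β ∈ Ioo 0 1) (hni : ∀ k : ℤ, β + 2 * s ≠ k)
    (hv : ContDiff ℝ ⌊β + 2 * s⌋₊ v)
    (hH : ∀ x y, ‖iteratedFDeriv ℝ ⌊β + 2 * s⌋₊ v x - iteratedFDeriv ℝ ⌊β + 2 * s⌋₊ v y‖
      ≤ M * ‖x - y‖ ^ (β + 2 * s - ⌊β + 2 * s⌋₊))
    (hxy : x ≠ y) (hΛ : a.real univ ≤ Λ) :
    |anisoOp n s a v x - anisoOp n s a v y|
      ≤ Λ * (4 / β + 2 / s + 2 / (1 - β) + 2 / (2 - 2 * s)) * M * ‖x - y‖ ^ β := by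
  obtain ⟨hs0, hs1⟩ := hs
  obtain ⟨hβ0, hβ1⟩ := hβ
  have hM : 0 ≤ M := nonneg_of_mul_nonneg_left ((norm_nonneg _).trans (hH x y))
    (Real.rpow_pos_of_pos (norm_pos_iff.mpr (sub_ne_zero.mpr hxy)) _)
  have h₃ : 0 < 2 / (1 - β) := div_pos two_pos (by linarith)
  have h₄ : 0 < 2 / (2 - 2 * s) := div_pos two_pos (by linarith)
  have weaken : ∀ c, 0 ≤ c → c ≤ 4 / β + 2 / s + 2 / (1 - β) + 2 / (2 - 2 * s) →
      a.real univ * (c * M) * ‖x - y‖ ^ β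
        ≤ Λ * (4 / β + 2 / s + 2 / (1 - β) + 2 / (2 - 2 * s)) * M * ‖x - y‖ ^ β := by
    intro c hc₀ hc
    rw [← mul_assoc]
    gcongr
    exact measureReal_nonneg.trans hΛ
  have hne₁ : β + 2 * s ≠ 1 := by exact_mod_cast hni 1
  have hne₂ : β + 2 * s ≠ 2 := by exact_mod_cast hni 2
  rcases lt_or_gt_of_ne hne₁ with ht | ht₁
  · rw [Nat.floor_eq_zero.mpr ht] at hH
    simp only [norm_iteratedFDeriv_zero_sub, Nat.cast_zero, sub_zero] at hH
    refine (abs_anisoOp_sub_le_of_holder_zero hv.continuous hH hs0 hβ0 hxy).trans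
      (weaken _ (by positivity) ?_)
    linarith [div_pos four_pos hβ0]
  rcases lt_or_gt_of_ne hne₂ with ht₂ | ht₂
  · have hk : ⌊β + 2 * s⌋₊ = 1 := by
      rw [Nat.floor_eq_iff (by linarith)]; norm_num; constructor <;> linarith
    rw [hk] at hv hH
    simp only [norm_iteratedFDeriv_succ_sub v 0, norm_iteratedFDeriv_zero_sub, Nat.cast_one]
      at hH
    refine (abs_anisoOp_sub_le_of_holder_one
      (fun z => (hv.differentiable one_ne_zero z).hasFDerivAt) hH hM ht₁.le ⟨hβ0, hβ1⟩ hxy).trans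
      (weaken _ (by positivity) ?_)
    linarith [div_pos two_pos hs0]
  · have hk : ⌊β + 2 * s⌋₊ = 2 := by
      rw [Nat.floor_eq_iff (by linarith)]; norm_num; constructor <;> linarith
    rw [hk] at hv hH
    simp only [norm_iteratedFDeriv_succ_sub v 1, norm_iteratedFDeriv_succ_sub (fderiv ℝ v) 0,
      norm_iteratedFDeriv_zero_sub, Nat.cast_ofNat] at hH
    have hv' : ContDiff ℝ 1 (fderiv ℝ v) := hv.fderiv_right (by norm_num)
    refine (abs_anisoOp_sub_le_of_holder_two
      (fun z => (hv.differentiable two_ne_zero z).hasFDerivAt)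
      (fun z => (hv'.differentiable one_ne_zero z).hasFDerivAt) hH hM ht₂.le hs1 hβ1 hxy).trans
      (weaken _ (by positivity) ?_)
    linarith [div_pos four_pos hβ0, div_pos two_pos hs0]

end Operator

theorem anisoOp_loses_2s_derivatives
    (n : ℕ) (s β Λ : ℝ) (hs : s ∈ Set.Ioo (0 : ℝ) 1)
    (hβ : β ∈ Set.Ioo (0 : ℝ) 1) (hΛ : 0 < Λ)
    (hni : ∀ k : ℤ, β + 2 * s ≠ (k : ℝ)) :
    ∃ C > 0, ∀ (a : Measure (Metric.sphere (0 : EuclideanSpace ℝ (Fin n)) 1))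
      (v : EuclideanSpace ℝ (Fin n) → ℝ) (M : ℝ),
      a Set.univ ≤ ENNReal.ofReal Λ →
      ContDiff ℝ (⌊β + 2 * s⌋₊ : ℕ) v →
      (∀ x y : EuclideanSpace ℝ (Fin n),
        ‖iteratedFDeriv ℝ ⌊β + 2 * s⌋₊ v x - iteratedFDeriv ℝ ⌊β + 2 * s⌋₊ v y‖
          ≤ M * ‖x - y‖ ^ (β + 2 * s - (⌊β + 2 * s⌋₊ : ℝ))) →
      ∀ x ∈ Metric.ball (0 : EuclideanSpace ℝ (Fin n)) 1,
        ∀ y ∈ Metric.ball (0 : EuclideanSpace ℝ (Fin n)) 1,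
        |anisoOp n s a v x - anisoOp n s a v y| ≤ C * M * ‖x - y‖ ^ β := by
  have hc : 0 < 4 / β + 2 / s + 2 / (1 - β) + 2 / (2 - 2 * s) := by
    have := div_pos two_pos (sub_pos.mpr hβ.2)
    have := div_pos two_pos (by linarith [hs.2] : (0 : ℝ) < 2 - 2 * s)
    have := div_pos four_pos hβ.1
    have := div_pos two_pos hs.1
    linarith
  refine ⟨_, mul_pos hΛ hc, fun a v M ha hv hH x _ y _ => ?_⟩
  rcases eq_or_ne x y with rfl | hxy
  · simp [Real.zero_rpow hβ.1.ne']
  have : IsFiniteMeasure a := ⟨ha.trans_lt ENNReal.ofReal_lt_top⟩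
  exact abs_anisoOp_sub_le_of_contDiff_holder hs hβ hni hv hH hxy
    (ENNReal.toReal_le_of_le_ofReal hΛ.le ha)
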